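/- arXiv:math/0403398 — 2 statements merged into one kernel-verified Lean document; each statement's English description precedes it below -/
import Mathlib

section
/- With R and P as above (R(-1) = 0, R(0) = 1, R(j) ≥ 1 for 1 ≤ j ≤ N, increments at most +1, and P(i) = max{k < i : R(k) = R(i) - 1}), if P(i) < j < i then P(i) ≤ P(j) < j. Consequently, either P(j+1) = j or P(j+1) ≤ P(j). -/
/-- With `R` as in the predecessor construction (`R(-1)=0`, `R(0)=1`, `R(j) ≥ 1` for
`1 ≤ j ≤ N`, increments at most `+1`) and `P(i) = max{k ∈ {-1,…,i-1} : R(k) = R(i)-1}`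
(characterized by `hP`), if `P(i) < j < i` then `P(i) ≤ P(j) < j`; consequently either
`P(j+1) = j` or `P(j+1) ≤ P(j)`. -/
theorem predecessor_noncrossing (N : ℕ) (R P : ℤ → ℤ)
    (hm1 : R (-1) = 0) (h0 : R 0 = 1)
    (hpos : ∀ j : ℤ, 1 ≤ j → j ≤ (N : ℤ) → 1 ≤ R j)
    (hinc : ∀ j : ℤ, -1 ≤ j → j < (N : ℤ) → R (j + 1) - R j ≤ 1)
    (hP : ∀ i : ℤ, 0 ≤ i → i ≤ (N : ℤ) →
      (-1 ≤ P i ∧ P i < i ∧ R (P i) = R i - 1 ∧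
        ∀ k : ℤ, -1 ≤ k → k < i → R k = R i - 1 → k ≤ P i)) :
    ∀ i j : ℤ, 0 ≤ i → i ≤ (N : ℤ) → P i < j → j < i →
      (P i ≤ P j ∧ P j < j) ∧ (P (j + 1) = j ∨ P (j + 1) ≤ P j) := by
  -- Key lemma: R stays ≥ R i on (P i, i].
  have keyN : ∀ i : ℤ, 0 ≤ i → i ≤ (N : ℤ) → ∀ n : ℕ, ∀ k : ℤ,
      k = i - (n : ℤ) → P i < k → R i ≤ R k := by
    intro i hi0 hiN n
    induction n with
    | zero =>
      intro k hk _
      have : k = i := by simpa using hk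
      simp [this]
    | succ m ih =>
      intro k hk hPk
      obtain ⟨hPm1, _, hRP, hmax⟩ := hP i hi0 hiN
      have hk1 : k + 1 = i - (m : ℤ) := by push_cast at hk ⊢; linarith
      have h1 : R i ≤ R (k + 1) := ih (k + 1) hk1 (by linarith)
      have hkN : k < (N : ℤ) := by
        have : k < i := by push_cast at hk; omega
        linarith
      have hkm1 : -1 ≤ k := by linarith
      have h2 : R (k + 1) - R k ≤ 1 := hinc k hkm1 hkN
      have h3 : R i - 1 ≤ R k := by linarith
      rcases eq_or_lt_of_le h3 with heq | hlt
      · exfalso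
        have hki : k < i := by push_cast at hk; omega
        have := hmax k hkm1 hki heq.symm
        omega
      · omega
  have key : ∀ i : ℤ, 0 ≤ i → i ≤ (N : ℤ) → ∀ k : ℤ,
      P i < k → k ≤ i → R i ≤ R k := by
    intro i hi0 hiN k hPk hki
    have hnn : 0 ≤ i - k := by omega
    exact keyN i hi0 hiN (i - k).toNat k (by omega) hPk
  intro i j hi0 hiN hPij hji
  obtain ⟨hiPm1, hiPlt, hiRP, himax⟩ := hP i hi0 hiN
  have hj0 : 0 ≤ j := by omega
  have hjN : j ≤ (N : ℤ) := by omega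
  obtain ⟨hjPm1, hjPlt, hjRP, hjmax⟩ := hP j hj0 hjN
  have hRij : R i ≤ R j := key i hi0 hiN j hPij (le_of_lt hji)
  constructor
  · refine ⟨?_, hjPlt⟩
    by_contra hcon
    push_neg at hcon
    -- P j < P i < j, so R j ≤ R (P i); but R (P i) = R i - 1 < R i ≤ R j
    have := key j hj0 hjN (P i) hcon (le_of_lt hPij)
    omega
  · have hj1N : j + 1 ≤ (N : ℤ) := by omega
    have hj10 : 0 ≤ j + 1 := by omega
    obtain ⟨hj1Pm1, hj1Plt, hj1RP, hj1max⟩ := hP (j + 1) hj10 hj1N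
    have hincj : R (j + 1) - R j ≤ 1 := hinc j (by omega) (by omega)
    rcases eq_or_lt_of_le hincj with heq | hlt
    · -- R (j+1) = R j + 1, so P (j+1) = j
      left
      have : j ≤ P (j + 1) := hj1max j (by omega) (by omega) (by omega)
      omega
    · -- R (j+1) ≤ R j, so R (P (j+1)) < R j; then P (j+1) ≤ P j
      right
      by_contra hcon
      push_neg at hcon
      have hle : P (j + 1) ≤ j := by omega
      rcases eq_or_lt_of_le hle with heq2 | hlt2
      · -- P (j+1) = j : then R j = R(j+1) - 1, but R(j+1) ≤ R j
        rw [heq2] at hj1RP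
        omega
      · have := key j hj0 hjN (P (j + 1)) hcon (le_of_lt hlt2)
        omega
end

section
/- Let ζ ∈ C[0,1] with ζ(0)=ζ(1)=0, ζ ≥ 0, and let E_ζ be the associated quotient metric tree. Then E_ζ contains no subset homeomorphic to a circle; consequently between any two points of E_ζ there is a unique geodesic (isometric embedding of an interval joining them). -/
/-!
The branch heights `ζ̌` satisfy `min (ζ̌ x z) (ζ̌ z y) ≤ ζ̌ x y`, and this ultrametric-type
inequality alone forces Gromov's four-point condition for `d_ζ`, i.e. `E_ζ` is `0`-hyperbolic.
Along the ancestral line of a vertex the distance is the difference of heights, so descending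
from `x` to the deepest common ancestor of `x` and `y` and climbing up to `y` gives a geodesic.
In a `0`-hyperbolic space a point between `a` and `b` is determined by its distance to `a`, so
geodesics are unique; moreover such a point `p ≠ a, b` separates `a` from `b`: the sign of the
Gromov product `(w | a)_p` splits the complement of `p` into two open sets. A circle cannot
embed, since it stays connected after removing any point.
-/

open Set

/-- The tree pseudometric of an excursion. -/
noncomputable def treeDist (ζ : ℝ → ℝ) (x y : ℝ) : ℝ :=
  ζ x + ζ y - 2 * sInf (ζ '' Set.uIcc x y)

/-- A map `γ : ℝ → E` is a geodesic from `x` to `y` (parameterized by arclength on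
`[0, dist x y]`). -/
def IsGeodesicFromTo {E : Type*} [MetricSpace E] (γ : ℝ → E) (x y : E) : Prop :=
  γ 0 = x ∧ γ (dist x y) = y ∧
    ∀ s ∈ Set.Icc (0:ℝ) (dist x y), ∀ t ∈ Set.Icc (0:ℝ) (dist x y),
      dist (γ s) (γ t) = |s - t|

/-- `0`-hyperbolicity in the sense of Gromov. -/
def FourPointCondition (E : Type*) [PseudoMetricSpace E] : Prop :=
  ∀ x y z w : E, dist x y + dist z w ≤ max (dist x z + dist y w) (dist x w + dist y z)

noncomputable def gromovProduct {E : Type*} [PseudoMetricSpace E] (p x y : E) : ℝ :=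
  (dist x p + dist y p - dist x y) / 2

section Geodesic

variable {E : Type*} [MetricSpace E] {γ : ℝ → E} {x y : E}

lemma isGeodesicFromTo_of_le (h0 : γ 0 = x) (hD : γ (dist x y) = y)
    (h : ∀ s t, 0 ≤ s → s ≤ t → t ≤ dist x y → dist (γ s) (γ t) = t - s) :
    IsGeodesicFromTo γ x y := by
  refine ⟨h0, hD, fun s hs t ht => ?_⟩
  rcases le_total s t with hst | hts
  · rw [h s t hs.1 hst ht.2, abs_of_nonpos (by linarith), neg_sub]
  · rw [dist_comm, h t s ht.1 hts hs.2, abs_of_nonneg (by linarith)]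

lemma IsGeodesicFromTo.dist_left (hγ : IsGeodesicFromTo γ x y) {t : ℝ}
    (ht : t ∈ Icc 0 (dist x y)) : dist x (γ t) = t := by
  rw [← hγ.1, hγ.2.2 0 ⟨le_rfl, dist_nonneg⟩ t ht, zero_sub, abs_neg, abs_of_nonneg ht.1]

lemma IsGeodesicFromTo.dist_right (hγ : IsGeodesicFromTo γ x y) {t : ℝ}
    (ht : t ∈ Icc 0 (dist x y)) : dist (γ t) y = dist x y - t := by
  conv_lhs => rw [← hγ.2.1]
  rw [hγ.2.2 t ht _ ⟨dist_nonneg, le_rfl⟩, abs_of_nonpos (by linarith [ht.2]), neg_sub]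

lemma IsGeodesicFromTo.reverse (hγ : IsGeodesicFromTo γ x y) :
    IsGeodesicFromTo (fun s => γ (dist x y - s)) y x := by
  have hD : dist y x = dist x y := dist_comm y x
  refine ⟨by simpa [hD] using hγ.2.1, by simpa [hD] using hγ.1, fun s hs t ht => ?_⟩
  rw [hD] at hs ht
  rw [hγ.2.2 _ ⟨by linarith [hs.2], by linarith [hs.1]⟩ _ ⟨by linarith [ht.2], by linarith [ht.1]⟩,
    abs_sub_comm s t]
  ring_nf

lemma IsGeodesicFromTo.exists_between (hγ : IsGeodesicFromTo γ x y) (hxy : x ≠ y) :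
    ∃ p, dist x p + dist p y = dist x y ∧ p ≠ x ∧ p ≠ y := by
  have hd := dist_pos.2 hxy
  have hmid : dist x y / 2 ∈ Icc 0 (dist x y) := ⟨by positivity, by linarith⟩
  have h₁ := hγ.dist_left hmid
  have h₂ := hγ.dist_right hmid
  refine ⟨γ (dist x y / 2), by linarith, fun h => ?_, fun h => ?_⟩
  · rw [h, dist_self] at h₁
    linarith
  · rw [h, dist_self] at h₂
    linarith

end Geodesic

namespace FourPointCondition

variable {E : Type*} [MetricSpace E] (h4 : FourPointCondition E)
include h4

lemma min_gromovProduct_le (p x y z : E) :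
    min (gromovProduct p x z) (gromovProduct p z y) ≤ gromovProduct p x y := by
  have := h4 x y z p
  simp only [gromovProduct, min_le_iff, le_max_iff] at this ⊢
  rw [dist_comm z y]
  rcases this with h | h
  · left; linarith
  · right; linarith

lemma eq_of_dist_add_dist_eq {a b c c' : E} (hc : dist a c + dist c b = dist a b)
    (hc' : dist a c' + dist c' b = dist a b) (hac : dist a c = dist a c') : c = c' := by
  have := h4 c c' a b
  rw [dist_comm c a, dist_comm c' a] at this
  exact dist_le_zero.1 (by rcases le_max_iff.1 this with h | h <;> linarith)

lemma dist_eq_add_of_dist_add_dist_eq {x y z u v : E} (hz : dist x z + dist z y = dist x y)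
    (hu : dist x u + dist u z = dist x z) (hv : dist z v + dist v y = dist z y) :
    dist u v = dist u z + dist z v := by
  have h := h4 x v u y
  rw [dist_comm v u] at h
  rcases le_max_iff.1 h with h | h <;>
    linarith [dist_triangle x v y, dist_triangle x u y, dist_triangle u z v,
      dist_nonneg (x := u) (y := z), dist_nonneg (x := z) (y := v), dist_nonneg (x := u) (y := v)]

lemma isGeodesicFromTo_append {z : E} {γ₁ γ₂ : ℝ → E} {x y : E} (h₁ : IsGeodesicFromTo γ₁ x z)
    (h₂ : IsGeodesicFromTo γ₂ z y) (hz : dist x z + dist z y = dist x y) :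
    IsGeodesicFromTo (fun s => if s ≤ dist x z then γ₁ s else γ₂ (s - dist x z)) x y := by
  refine isGeodesicFromTo_of_le (by simp [h₁.1]) ?_ fun s t hs hst ht => ?_
  · split_ifs with hD
    · have hzy : dist z y = 0 := by linarith [dist_nonneg (x := z) (y := y)]
      rw [show dist x y = dist x z by linarith, h₁.2.1]
      exact dist_eq_zero.1 hzy
    · rw [show dist x y - dist x z = dist z y by linarith, h₂.2.1]
  · split_ifs with hsz htz htz
    · exact (h₁.2.2 s ⟨hs, hsz⟩ t ⟨by linarith, htz⟩).trans
        (by rw [abs_of_nonpos (by linarith), neg_sub])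
    · have hs' : s ∈ Icc 0 (dist x z) := ⟨hs, hsz⟩
      have ht' : t - dist x z ∈ Icc 0 (dist z y) := ⟨by linarith, by linarith⟩
      rw [h4.dist_eq_add_of_dist_add_dist_eq hz (by rw [h₁.dist_left hs', h₁.dist_right hs']; ring)
        (by rw [h₂.dist_left ht', h₂.dist_right ht']; ring), h₁.dist_right hs', h₂.dist_left ht']
      ring
    · linarith
    · rw [h₂.2.2 _ ⟨by linarith, by linarith⟩ _ ⟨by linarith, by linarith⟩,
        abs_of_nonpos (by linarith)]
      ring

lemma eq_of_isGeodesicFromTo {γ₁ γ₂ : ℝ → E} {x y : E} (h₁ : IsGeodesicFromTo γ₁ x y)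
    (h₂ : IsGeodesicFromTo γ₂ x y) {t : ℝ} (ht : t ∈ Icc 0 (dist x y)) : γ₁ t = γ₂ t :=
  h4.eq_of_dist_add_dist_eq (a := x) (b := y) (by rw [h₁.dist_left ht, h₁.dist_right ht]; ring)
    (by rw [h₂.dist_left ht, h₂.dist_right ht]; ring) (by rw [h₁.dist_left ht, h₂.dist_left ht])

lemma isOpen_setOf_gromovProduct_pos (p a : E) : IsOpen {w | 0 < gromovProduct p w a} := by
  refine Metric.isOpen_iff.2 fun w hw => ⟨_, hw, fun w' hw' => ?_⟩
  have hw' : dist w' w < gromovProduct p w a := hw'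
  have hww' : 0 < gromovProduct p w' w := by
    have := dist_triangle w w' p
    have := dist_triangle a w p
    simp only [gromovProduct] at *
    rw [dist_comm w w', dist_comm a w] at *
    linarith
  exact lt_of_lt_of_le (lt_min hww' hw) (h4.min_gromovProduct_le p w' a w)

lemma isOpen_setOf_gromovProduct_nonpos (p a : E) :
    IsOpen {w | w ≠ p ∧ gromovProduct p w a ≤ 0} := by
  refine Metric.isOpen_iff.2 fun w hw => ⟨dist w p, dist_pos.2 hw.1, fun w' hw' => ?_⟩
  have hw' : dist w' w < dist w p := hw'
  have hw'p : w' ≠ p := by rintro rfl; exact (lt_irrefl _ (dist_comm w w' ▸ hw'))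
  refine ⟨hw'p, not_lt.1 fun hpos => hw.2.not_gt (lt_of_lt_of_le (lt_min ?_ hpos)
    (h4.min_gromovProduct_le p w a w'))⟩
  have := dist_triangle w w' p
  have := dist_pos.2 hw'p
  simp only [gromovProduct]
  rw [dist_comm w w']
  linarith

lemma mem_of_isPreconnected {s : Set E} (hs : IsPreconnected s) {a b p : E} (ha : a ∈ s)
    (hb : b ∈ s) (hp : dist a p + dist p b = dist a b) (hpa : p ≠ a) (hpb : p ≠ b) : p ∈ s := by
  by_contra hps
  have hcover : s ⊆ {w | 0 < gromovProduct p w a} ∪ {w | w ≠ p ∧ gromovProduct p w a ≤ 0} :=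
    fun q hq => (lt_or_ge 0 (gromovProduct p q a)).imp id fun h => ⟨fun hqp => hps (hqp ▸ hq), h⟩
  have haU : 0 < gromovProduct p a a := by
    simp only [gromovProduct, dist_self]; linarith [dist_pos.2 hpa.symm]
  have hbV : gromovProduct p b a ≤ 0 := by
    simp only [gromovProduct]; rw [dist_comm b p, dist_comm b a]; linarith
  obtain ⟨q, -, hqU, -, hqV⟩ := hs _ _ (h4.isOpen_setOf_gromovProduct_pos p a)
    (h4.isOpen_setOf_gromovProduct_nonpos p a) hcover ⟨a, ha, haU⟩ ⟨b, hb, hpb.symm, hbV⟩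
  exact hqV.not_gt hqU

lemma not_nonempty_homeomorph_circle (hgeo : ∀ x y : E, ∃ γ : ℝ → E, IsGeodesicFromTo γ x y)
    (S : Set E) : ¬ Nonempty (S ≃ₜ Circle) := by
  rintro ⟨e⟩
  set f : Circle → E := fun z => e.symm z
  have hf : Continuous f := continuous_subtype_val.comp e.symm.continuous
  have hf_inj : Function.Injective f := Subtype.val_injective.comp e.symm.injective
  obtain ⟨γ, hγ⟩ := hgeo (f 1) (f (-1))
  obtain ⟨p, hp, hp₁, hp₂⟩ := hγ.exists_between (hf_inj.ne (Circle.neg_ne_self 1).symm)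
  obtain ⟨z, -, rfl⟩ := h4.mem_of_isPreconnected (isPreconnected_univ.image f hf.continuousOn)
    (mem_image_of_mem f (mem_univ 1)) (mem_image_of_mem f (mem_univ (-1))) hp hp₁ hp₂
  obtain ⟨w, hwz, hw⟩ := h4.mem_of_isPreconnected
    ((Circle.isPathConnected_compl_singleton z).isConnected.isPreconnected.image f
      hf.continuousOn)
    (mem_image_of_mem f fun h => hp₁ (congrArg f h.symm))
    (mem_image_of_mem f fun h => hp₂ (congrArg f h.symm)) hp hp₁ hp₂
  exact hwz (hf_inj hw)

end FourPointCondition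

lemma eq_of_mem_uIcc_of_abs_sub_le {x s t s' : ℝ} (hs' : s' ∈ uIcc x s) (hs : s ∈ uIcc x t)
    (h : |t - x| ≤ |s' - x|) : s = t := by
  rw [mem_uIcc] at hs' hs
  rcases hs' with ⟨_, _⟩ | ⟨_, _⟩ <;> rcases hs with ⟨_, _⟩ | ⟨_, _⟩ <;>
    rcases abs_cases (t - x) with ⟨_, _⟩ | ⟨_, _⟩ <;>
    rcases abs_cases (s' - x) with ⟨_, _⟩ | ⟨_, _⟩ <;> linarith

/-- `ζ̌(x, y)`: the height of the deepest common ancestor of the vertices coded by `x` and `y`. -/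
noncomputable def branchHeight (ζ : ℝ → ℝ) (x y : ℝ) : ℝ := sInf (ζ '' uIcc x y)

/-- The vertex coded by `c` lies on the ancestral path of the vertex coded by `x`. -/
def IsAncestor (ζ : ℝ → ℝ) (c x : ℝ) : Prop := branchHeight ζ x c = ζ c

section Excursion

variable {ζ : ℝ → ℝ}

lemma treeDist_eq (ζ : ℝ → ℝ) (x y : ℝ) :
    treeDist ζ x y = ζ x + ζ y - 2 * branchHeight ζ x y := rfl

lemma branchHeight_comm (ζ : ℝ → ℝ) (x y : ℝ) : branchHeight ζ x y = branchHeight ζ y x := by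
  rw [branchHeight, branchHeight, uIcc_comm]

lemma isAncestor_self (ζ : ℝ → ℝ) (x : ℝ) : IsAncestor ζ x x := by
  simp [IsAncestor, branchHeight]

lemma isLeast_branchHeight {x y : ℝ} (hc : ContinuousOn ζ (uIcc x y)) :
    IsLeast (ζ '' uIcc x y) (branchHeight ζ x y) := by
  obtain ⟨u, hu, hmin⟩ := isCompact_uIcc.exists_isMinOn nonempty_uIcc hc
  have hu' : IsLeast (ζ '' uIcc x y) (ζ u) :=
    ⟨mem_image_of_mem ζ hu, forall_mem_image.2 fun t ht => hmin ht⟩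
  rwa [branchHeight, hu'.csInf_eq]

lemma branchHeight_le {x y t : ℝ} (hc : ContinuousOn ζ (uIcc x y)) (ht : t ∈ uIcc x y) :
    branchHeight ζ x y ≤ ζ t :=
  (isLeast_branchHeight hc).2 (mem_image_of_mem ζ ht)

lemma branchHeight_le_branchHeight {x y x' y' : ℝ} (hc : ContinuousOn ζ (uIcc x y))
    (h : uIcc x' y' ⊆ uIcc x y) : branchHeight ζ x y ≤ branchHeight ζ x' y' := by
  obtain ⟨t, ht, hζt⟩ := (isLeast_branchHeight (hc.mono h)).1
  exact hζt ▸ branchHeight_le hc (h ht)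

lemma min_branchHeight_le (hc : ContinuousOn ζ (Icc 0 1)) {x y z : ℝ} (hx : x ∈ Icc (0:ℝ) 1)
    (hy : y ∈ Icc (0:ℝ) 1) (hz : z ∈ Icc (0:ℝ) 1) :
    min (branchHeight ζ x z) (branchHeight ζ z y) ≤ branchHeight ζ x y := by
  obtain ⟨t, ht, hζt⟩ := (isLeast_branchHeight (hc.mono (uIcc_subset_Icc hx hy))).1
  rw [← hζt]
  rcases uIcc_subset_uIcc_union_uIcc (b := z) ht with h | h
  · exact (min_le_left _ _).trans (branchHeight_le (hc.mono (uIcc_subset_Icc hx hz)) h)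
  · exact (min_le_right _ _).trans (branchHeight_le (hc.mono (uIcc_subset_Icc hz hy)) h)

lemma exists_common_ancestor {x y : ℝ} (hc : ContinuousOn ζ (uIcc x y)) :
    ∃ c ∈ uIcc x y, ζ c = branchHeight ζ x y ∧ IsAncestor ζ c x ∧ IsAncestor ζ c y := by
  obtain ⟨c, hcxy, hζc⟩ := (isLeast_branchHeight hc).1
  refine ⟨c, hcxy, hζc, ?_, ?_⟩
  · exact le_antisymm (branchHeight_le (hc.mono (uIcc_subset_uIcc_left hcxy)) right_mem_uIcc)
      (hζc ▸ branchHeight_le_branchHeight hc (uIcc_subset_uIcc_left hcxy))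
  · rw [IsAncestor, branchHeight_comm]
    exact le_antisymm (branchHeight_le (hc.mono (uIcc_subset_uIcc_right hcxy)) left_mem_uIcc)
      (hζc ▸ branchHeight_le_branchHeight hc (uIcc_subset_uIcc_right hcxy))

/-- The ancestor of `x` at height `h` is coded by the point of the level set `ζ = h` closest to
`x`. -/
lemma exists_isAncestor_eq {x y h : ℝ} (hc : ContinuousOn ζ (uIcc x y))
    (hh : h ∈ Icc (branchHeight ζ x y) (ζ x)) : ∃ t ∈ uIcc x y, ζ t = h ∧ IsAncestor ζ t x := by
  obtain ⟨m, hm, hζm⟩ := (isLeast_branchHeight hc).1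
  have hK : (uIcc x y ∩ ζ ⁻¹' {h}).Nonempty := by
    obtain ⟨t, ht, hζt⟩ := intermediate_value_uIcc (hc.mono (uIcc_subset_uIcc_left hm))
      (mem_uIcc.2 (Or.inr ⟨hζm ▸ hh.1, hh.2⟩))
    exact ⟨t, uIcc_subset_uIcc_left hm ht, hζt⟩
  have hKc : IsCompact (uIcc x y ∩ ζ ⁻¹' {h}) := isCompact_uIcc.of_isClosed_subset
    (hc.preimage_isClosed_of_isClosed isCompact_uIcc.isClosed isClosed_singleton) inter_subset_left
  obtain ⟨t, ⟨htxy, hζt⟩, hclosest⟩ :=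
    hKc.exists_isMinOn hK (continuous_abs.comp (continuous_sub_right x)).continuousOn
  have hsub : uIcc x t ⊆ uIcc x y := uIcc_subset_uIcc_left htxy
  have above : ∀ s ∈ uIcc x t, h ≤ ζ s := by
    intro s hs
    by_contra! hlt
    obtain ⟨s', hs', hζs'⟩ :=
      intermediate_value_uIcc (hc.mono ((uIcc_subset_uIcc_left hs).trans hsub))
        (mem_uIcc.2 (Or.inr ⟨hlt.le, hh.2⟩))
    have hst : s = t := eq_of_mem_uIcc_of_abs_sub_le hs' hs
      (hclosest ⟨hsub (uIcc_subset_uIcc_left hs hs'), hζs'⟩)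
    exact hlt.ne (hst ▸ hζt)
  refine ⟨t, htxy, hζt, le_antisymm (branchHeight_le (hc.mono hsub) right_mem_uIcc) ?_⟩
  obtain ⟨r, hr, hζr⟩ := (isLeast_branchHeight (hc.mono hsub)).1
  rw [← hζr, hζt]
  exact above r hr

lemma treeDist_eq_abs_of_isAncestor (hc : ContinuousOn ζ (Icc 0 1)) {x t₁ t₂ : ℝ}
    (hx : x ∈ Icc (0:ℝ) 1) (ht₁ : t₁ ∈ Icc (0:ℝ) 1) (ht₂ : t₂ ∈ Icc (0:ℝ) 1)
    (h₁ : IsAncestor ζ t₁ x) (h₂ : IsAncestor ζ t₂ x) : treeDist ζ t₁ t₂ = |ζ t₁ - ζ t₂| := by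
  have hge := min_branchHeight_le hc ht₁ ht₂ hx
  rw [branchHeight_comm ζ t₁ x, h₁, h₂] at hge
  have hc' := hc.mono (uIcc_subset_Icc ht₁ ht₂)
  have hle := le_min (branchHeight_le hc' left_mem_uIcc) (branchHeight_le hc' right_mem_uIcc)
  rw [treeDist_eq, le_antisymm hle hge, abs_sub_comm]
  linarith [min_add_max (ζ t₁) (ζ t₂), max_sub_min_eq_abs (ζ t₁) (ζ t₂)]

end Excursion

lemma min_add_le_add_of_min_le {α : Type*} {A : α → α → ℝ} (hsymm : ∀ x y, A x y = A y x)
    (hA : ∀ x y z, min (A x z) (A z y) ≤ A x y) (x y z w : α) :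
    min (A x z + A y w) (A x w + A y z) ≤ A x y + A z w := by
  have h₁ := hA x y z
  have h₂ := hA x y w
  have h₃ := hA z w x
  have h₄ := hA z w y
  rw [hsymm z y] at h₁ h₄
  rw [hsymm w y] at h₂
  rw [hsymm z x] at h₃
  simp only [min_le_iff] at *
  by_contra! h
  rcases h₁ with h₁ | h₁ <;> rcases h₂ with h₂ | h₂ <;> rcases h₃ with h₃ | h₃ <;>
    rcases h₄ with h₄ | h₄ <;> linarith [h.1, h.2]

section TreeSpace

variable {ζ : ℝ → ℝ} {E : Type*} [MetricSpace E] {F : Icc (0:ℝ) 1 → E}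

lemma fourPointCondition_of_treeDist (hc : ContinuousOn ζ (Icc 0 1))
    (hsurj : Function.Surjective F)
    (hdist : ∀ x y : Icc (0:ℝ) 1, dist (F x) (F y) = treeDist ζ x.1 y.1) :
    FourPointCondition E := by
  intro x y z w
  obtain ⟨x, rfl⟩ := hsurj x
  obtain ⟨y, rfl⟩ := hsurj y
  obtain ⟨z, rfl⟩ := hsurj z
  obtain ⟨w, rfl⟩ := hsurj w
  have := min_add_le_add_of_min_le (A := fun a b : Icc (0:ℝ) 1 => branchHeight ζ a b)
    (fun a b => branchHeight_comm ζ a b) (fun a b c => min_branchHeight_le hc a.2 b.2 c.2) x y z w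
  simp only [hdist, treeDist_eq]
  rcases min_le_iff.1 this with h | h
  · exact le_max_of_le_left (by linarith)
  · exact le_max_of_le_right (by linarith)

variable (hc : ContinuousOn ζ (Icc 0 1))
    (hdist : ∀ x y : Icc (0:ℝ) 1, dist (F x) (F y) = treeDist ζ x.1 y.1)
include hc hdist

lemma dist_eq_abs_of_isAncestor {x t₁ t₂ : Icc (0:ℝ) 1} (h₁ : IsAncestor ζ t₁ x)
    (h₂ : IsAncestor ζ t₂ x) : dist (F t₁) (F t₂) = |ζ t₁ - ζ t₂| := by
  rw [hdist]
  exact treeDist_eq_abs_of_isAncestor hc x.2 t₁.2 t₂.2 h₁ h₂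

lemma exists_isGeodesicFromTo_of_isAncestor {x c : Icc (0:ℝ) 1} (hcx : IsAncestor ζ c x) :
    ∃ γ : ℝ → E, IsGeodesicFromTo γ (F x) (F c) := by
  have hxc : uIcc x.1 c ⊆ Icc 0 1 := uIcc_subset_Icc x.2 c.2
  have hanc : ∀ h ∈ Icc (ζ c) (ζ x), ∃ t : Icc (0:ℝ) 1, ζ t = h ∧ IsAncestor ζ t x := by
    intro h hh
    rw [← hcx] at hh
    obtain ⟨t, ht, hζt, htx⟩ := exists_isAncestor_eq (hc.mono hxc) hh
    exact ⟨⟨t, hxc ht⟩, hζt, htx⟩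
  have : Nonempty (Icc (0:ℝ) 1) := ⟨x⟩
  choose! anc hζanc hanc using hanc
  have hF : ∀ {t₁ t₂ : Icc (0:ℝ) 1}, IsAncestor ζ t₁ x → IsAncestor ζ t₂ x → ζ t₁ = ζ t₂ →
      F t₁ = F t₂ := fun h₁ h₂ h => dist_eq_zero.1 <| by
    rw [dist_eq_abs_of_isAncestor hc hdist h₁ h₂, h, sub_self, abs_zero]
  have hD : dist (F x) (F c) = ζ x - ζ c := by
    rw [hdist, treeDist_eq, hcx]
    ring
  have hmem : ∀ s ∈ Icc 0 (dist (F x) (F c)), ζ x - s ∈ Icc (ζ c) (ζ x) := fun s hs => by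
    rw [hD] at hs
    exact ⟨by linarith [hs.2], by linarith [hs.1]⟩
  refine ⟨fun s => F (anc (ζ x - s)), isGeodesicFromTo_of_le ?_ ?_ fun s t hs hst ht => ?_⟩
  · have h0 := hmem 0 ⟨le_rfl, dist_nonneg⟩
    exact hF (hanc _ h0) (isAncestor_self ζ x) (by rw [hζanc _ h0, sub_zero])
  · have hD' := hmem _ ⟨dist_nonneg, le_rfl⟩
    exact hF (hanc _ hD') hcx (by rw [hζanc _ hD', hD]; ring)
  · have hs' := hmem s ⟨hs, hst.trans ht⟩
    have ht' := hmem t ⟨hs.trans hst, ht⟩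
    rw [dist_eq_abs_of_isAncestor hc hdist (hanc _ hs') (hanc _ ht'), hζanc _ hs', hζanc _ ht',
      abs_of_nonneg (by linarith)]
    ring

lemma exists_isGeodesicFromTo (h4 : FourPointCondition E) (x y : Icc (0:ℝ) 1) :
    ∃ γ : ℝ → E, IsGeodesicFromTo γ (F x) (F y) := by
  have hxy : uIcc x.1 y ⊆ Icc 0 1 := uIcc_subset_Icc x.2 y.2
  obtain ⟨c, hcxy, hζc, hcx, hcy⟩ := exists_common_ancestor (hc.mono hxy)
  obtain ⟨γ₁, h₁⟩ := exists_isGeodesicFromTo_of_isAncestor hc hdist (c := ⟨c, hxy hcxy⟩) hcx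
  obtain ⟨γ₂, h₂⟩ := exists_isGeodesicFromTo_of_isAncestor hc hdist (c := ⟨c, hxy hcxy⟩) hcy
  refine ⟨_, h4.isGeodesicFromTo_append h₁ h₂.reverse ?_⟩
  rw [dist_comm _ (F y)]
  simp only [hdist, treeDist_eq]
  rw [hcx, hcy, ← hζc]
  ring

end TreeSpace

theorem treeSpace_acyclic_unique_geodesics_general (ζ : ℝ → ℝ)
    (hc : ContinuousOn ζ (Set.Icc 0 1))
    (E : Type*) [MetricSpace E] (F : Set.Icc (0:ℝ) 1 → E)
    (hsurj : Function.Surjective F)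
    (hdist : ∀ x y : Set.Icc (0:ℝ) 1, dist (F x) (F y) = treeDist ζ x.1 y.1) :
    (∀ S : Set E, ¬ Nonempty (S ≃ₜ Circle)) ∧
    ∀ x y : E,
      (∃ γ : ℝ → E, IsGeodesicFromTo γ x y) ∧
      ∀ γ₁ γ₂ : ℝ → E, IsGeodesicFromTo γ₁ x y → IsGeodesicFromTo γ₂ x y →
        ∀ t ∈ Set.Icc (0:ℝ) (dist x y), γ₁ t = γ₂ t := by
  have h4 : FourPointCondition E := fourPointCondition_of_treeDist hc hsurj hdist
  have hgeo : ∀ x y : E, ∃ γ : ℝ → E, IsGeodesicFromTo γ x y := by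
    intro x y
    obtain ⟨a, rfl⟩ := hsurj x
    obtain ⟨b, rfl⟩ := hsurj y
    exact exists_isGeodesicFromTo hc hdist h4 a b
  exact ⟨h4.not_nonempty_homeomorph_circle hgeo, fun x y =>
    ⟨hgeo x y, fun _ _ h₁ h₂ _ ht => h4.eq_of_isGeodesicFromTo h₁ h₂ ht⟩⟩

/-- The metric tree `E_ζ` encoded by a continuous nonnegative excursion `ζ` (realized as a
metric space `E` with surjection `F : [0,1] → E` inducing the tree pseudometric) contains
no subset homeomorphic to a circle, and between any two of its points there is a unique
geodesic. -/
theorem treeSpace_acyclic_unique_geodesics (ζ : ℝ → ℝ)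
    (hc : ContinuousOn ζ (Set.Icc 0 1))
    (h0 : ζ 0 = 0) (h1 : ζ 1 = 0)
    (hnn : ∀ x ∈ Set.Icc (0:ℝ) 1, 0 ≤ ζ x)
    (E : Type*) [MetricSpace E] (F : Set.Icc (0:ℝ) 1 → E)
    (hsurj : Function.Surjective F)
    (hdist : ∀ x y : Set.Icc (0:ℝ) 1, dist (F x) (F y) = treeDist ζ x.1 y.1) :
    (∀ S : Set E, ¬ Nonempty (S ≃ₜ Circle)) ∧
    ∀ x y : E,
      (∃ γ : ℝ → E, IsGeodesicFromTo γ x y) ∧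
      ∀ γ₁ γ₂ : ℝ → E, IsGeodesicFromTo γ₁ x y → IsGeodesicFromTo γ₂ x y →
        ∀ t ∈ Set.Icc (0:ℝ) (dist x y), γ₁ t = γ₂ t :=
  treeSpace_acyclic_unique_geodesics_general ζ hc E F hsurj hdist
end
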